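/- Define on J(3,ℍ) ⊕ ℍ³ the product (M + a) × (N + b) = (M × N − (1/2)(aᴴb + bᴴa)) − (1/2)(aN + bM), where a, b are row vectors, aᴴb denotes the 3×3 matrix a* b formed from the column a* and row b, and M × N is the Freudenthal product. For A ∈ Sp(3), the map φ(A)(M + a) = AMAᴴ + aAᴴ preserves this product: φ(A)((M+a)×(N+b)) = φ(A)(M+a) × φ(A)(N+b). -/

import Mathlib

/-!
Conjugation `X ↦ A X Aᴴ` by a quaternionic unitary `A` is multiplicative and fixes the trace of
Hermitian matrices: such traces are real, and the real part of a trace is cyclic even over the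
noncommutative ring `ℍ`. Hence it preserves the Jordan product, the trace form and the Freudenthal
product. The rank-one matrices `aᴴb` transform as `(aAᴴ)ᴴ(bAᴴ)`, and on the vector part
`aN ↦ aNAᴴ = (aAᴴ)(ANAᴴ)` because `AᴴA = 1`.
-/

noncomputable section
open Matrix

abbrev ℍ := Quaternion ℝ

def jmul (X Y : Matrix (Fin 3) (Fin 3) ℍ) : Matrix (Fin 3) (Fin 3) ℍ :=
  (1/2 : ℝ) • (X * Y + Y * X)

def inn (X Y : Matrix (Fin 3) (Fin 3) ℍ) : ℍ :=
  Matrix.trace (jmul X Y)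

/-- the Freudenthal product on `J(3,ℍ)`. -/
def fmul (X Y : Matrix (Fin 3) (Fin 3) ℍ) : Matrix (Fin 3) (Fin 3) ℍ :=
  (1/2 : ℝ) • ((2:ℝ) • jmul X Y - Matrix.trace X • Y - Matrix.trace Y • X
    + (Matrix.trace X * Matrix.trace Y - inn X Y) • (1 : Matrix (Fin 3) (Fin 3) ℍ))

/-- matrix part of the cross product on `J(3,ℍ) ⊕ ℍ³`:
`M × N − (1/2)(aᴴb + bᴴa)`. -/
def crossMat (M N : Matrix (Fin 3) (Fin 3) ℍ) (a b : Fin 3 → ℍ) :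
    Matrix (Fin 3) (Fin 3) ℍ :=
  fmul M N - (1/2 : ℝ) • (Matrix.of fun i j => star (a i) * b j + star (b i) * a j)

/-- vector part of the cross product on `J(3,ℍ) ⊕ ℍ³`: `−(1/2)(aN + bM)`. -/
def crossVec (M N : Matrix (Fin 3) (Fin 3) ℍ) (a b : Fin 3 → ℍ) : Fin 3 → ℍ :=
  -((1/2 : ℝ) • (Matrix.vecMul a N + Matrix.vecMul b M))

theorem Quaternion.re_sum {ι R : Type*} [CommRing R] (s : Finset ι) (f : ι → Quaternion R) :
    (∑ i ∈ s, f i).re = ∑ i ∈ s, (f i).re :=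
  map_sum (AddMonoidHom.mk' (fun q : Quaternion R => q.re) fun _ _ => Quaternion.re_add _ _) f s

theorem Quaternion.re_mul_comm {R : Type*} [CommRing R] (p q : Quaternion R) :
    (p * q).re = (q * p).re := by
  rw [Quaternion.re_mul, Quaternion.re_mul]; ring

instance Quaternion.instStarModuleReal : StarModule ℝ ℍ :=
  ⟨fun r q => by rw [Quaternion.star_smul, star_trivial r]⟩

namespace Matrix

theorem smul_eq_re_smul_of_star_eq_self {m n : Type*} {q : ℍ} (hq : star q = q)
    (X : Matrix m n ℍ) : q • X = q.re • X := by
  conv_lhs => rw [Quaternion.star_eq_self.mp hq]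
  exact Matrix.ext fun i j => Quaternion.coe_mul_eq_smul q.re (X i j)

variable {n : Type*} [Fintype n]

theorem re_trace_mul_comm {R : Type*} [CommRing R] (X Y : Matrix n n (Quaternion R)) :
    (X * Y).trace.re = (Y * X).trace.re := by
  simp only [trace, diag, mul_apply, Quaternion.re_sum]
  rw [Finset.sum_comm]
  simp only [Quaternion.re_mul_comm]

theorem IsHermitian.star_trace {X : Matrix n n ℍ} (hX : X.IsHermitian) :
    star X.trace = X.trace := by
  rw [← trace_conjTranspose, hX.eq]

theorem conj_smul_of_star_eq_self (A : Matrix n n ℍ) {q : ℍ} (hq : star q = q)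
    (X : Matrix n n ℍ) : A * (q • X) * Aᴴ = q • (A * X * Aᴴ) := by
  simp only [smul_eq_re_smul_of_star_eq_self hq, Matrix.mul_smul, Matrix.smul_mul]

theorem mul_vecMulVec_star_mul_conjTranspose (A : Matrix n n ℍ) (a b : n → ℍ) :
    A * vecMulVec (star a) b * Aᴴ = vecMulVec (star (a ᵥ* Aᴴ)) (b ᵥ* Aᴴ) := by
  rw [mul_vecMulVec, vecMulVec_mul, star_vecMul, conjTranspose_conjTranspose]

variable [DecidableEq n] {A : Matrix n n ℍ}

theorem conjTranspose_mul_conj (hA : Aᴴ * A = 1) (X : Matrix n n ℍ) :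
    Aᴴ * (A * X * Aᴴ) = X * Aᴴ := by
  rw [← Matrix.mul_assoc, ← Matrix.mul_assoc, hA, Matrix.one_mul]

theorem conj_mul_conj (hA : Aᴴ * A = 1) (X Y : Matrix n n ℍ) :
    A * X * Aᴴ * (A * Y * Aᴴ) = A * (X * Y) * Aᴴ := by
  rw [Matrix.mul_assoc _ Aᴴ, conjTranspose_mul_conj hA]
  simp only [Matrix.mul_assoc]

theorem re_trace_conj (hA : Aᴴ * A = 1) (X : Matrix n n ℍ) :
    (A * X * Aᴴ).trace.re = X.trace.re := by
  rw [re_trace_mul_comm, ← Matrix.mul_assoc, hA, Matrix.one_mul]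

theorem trace_conj_of_isHermitian (hA : Aᴴ * A = 1) {X : Matrix n n ℍ} (hX : X.IsHermitian) :
    (A * X * Aᴴ).trace = X.trace := by
  have hAXA : (A * X * Aᴴ).IsHermitian := isHermitian_mul_mul_conjTranspose A hX
  rw [Quaternion.star_eq_self.mp hAXA.star_trace, Quaternion.star_eq_self.mp hX.star_trace,
    re_trace_conj hA]

end Matrix

theorem isHermitian_jmul {X Y : Matrix (Fin 3) (Fin 3) ℍ} (hX : X.IsHermitian)
    (hY : Y.IsHermitian) : (jmul X Y).IsHermitian := by
  rw [IsHermitian, jmul, conjTranspose_smul, conjTranspose_add, conjTranspose_mul,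
    conjTranspose_mul, hX.eq, hY.eq, star_trivial, add_comm]

section

variable {A X Y : Matrix (Fin 3) (Fin 3) ℍ} (hA : Aᴴ * A = 1)
include hA

theorem jmul_conj : jmul (A * X * Aᴴ) (A * Y * Aᴴ) = A * jmul X Y * Aᴴ := by
  simp only [jmul, conj_mul_conj hA, Matrix.mul_smul, Matrix.smul_mul, Matrix.mul_add,
    Matrix.add_mul]

theorem inn_conj (hX : X.IsHermitian) (hY : Y.IsHermitian) :
    inn (A * X * Aᴴ) (A * Y * Aᴴ) = inn X Y := by
  rw [inn, jmul_conj hA, trace_conj_of_isHermitian hA (isHermitian_jmul hX hY), inn]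

theorem fmul_conj (hX : X.IsHermitian) (hY : Y.IsHermitian) :
    A * fmul X Y * Aᴴ = fmul (A * X * Aᴴ) (A * Y * Aᴴ) := by
  have hA' : A * Aᴴ = 1 := mul_eq_one_comm.mp hA
  have hsX := hX.star_trace
  have hsY := hY.star_trace
  -- `star (tr X * tr Y) = tr Y * tr X`, and real quaternions are central
  have hsC : star (X.trace * Y.trace - inn X Y) = X.trace * Y.trace - inn X Y := by
    rw [star_sub, star_mul, hsX, hsY, inn, (isHermitian_jmul hX hY).star_trace,
      Quaternion.star_eq_self.mp hsX, Quaternion.coe_commutes]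
  rw [fmul, fmul, trace_conj_of_isHermitian hA hX, trace_conj_of_isHermitian hA hY,
    inn_conj hA hX hY, jmul_conj hA]
  simp only [Matrix.mul_smul, Matrix.smul_mul, Matrix.mul_sub, Matrix.sub_mul, Matrix.mul_add,
    Matrix.add_mul, conj_smul_of_star_eq_self A hsX, conj_smul_of_star_eq_self A hsY,
    conj_smul_of_star_eq_self A hsC, Matrix.mul_one, hA']

end

theorem crossMat_eq_vecMulVec (M N : Matrix (Fin 3) (Fin 3) ℍ) (a b : Fin 3 → ℍ) :
    crossMat M N a b = fmul M N - (1/2 : ℝ) • (vecMulVec (star a) b + vecMulVec (star b) a) :=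
  rfl

theorem phi_preserves_cross (A M N : Matrix (Fin 3) (Fin 3) ℍ) (a b : Fin 3 → ℍ)
    (hA : Aᴴ * A = 1) (hM : Mᴴ = M) (hN : Nᴴ = N) :
    A * crossMat M N a b * Aᴴ
        = crossMat (A * M * Aᴴ) (A * N * Aᴴ) (Matrix.vecMul a Aᴴ) (Matrix.vecMul b Aᴴ) ∧
    Matrix.vecMul (crossVec M N a b) Aᴴ
        = crossVec (A * M * Aᴴ) (A * N * Aᴴ) (Matrix.vecMul a Aᴴ) (Matrix.vecMul b Aᴴ) := by
  constructor
  · rw [crossMat_eq_vecMulVec, crossMat_eq_vecMulVec, Matrix.mul_sub, Matrix.sub_mul,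
      fmul_conj hA hM hN, Matrix.mul_smul, Matrix.smul_mul, Matrix.mul_add, Matrix.add_mul,
      mul_vecMulVec_star_mul_conjTranspose, mul_vecMulVec_star_mul_conjTranspose]
  · simp only [crossVec, neg_vecMul, smul_vecMul, add_vecMul, vecMul_vecMul,
      conjTranspose_mul_conj hA]
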